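/- Let d ≥ 1 be an integer, let G be a graph on vertex set [n] with n > d, fix a generic embedding 𝐩 : [n] → ℝ^d, and let A ⊆ [n]. If A induces a clique in the d-rigidity closure C_d(G), then every pair in C_{d,A}(G) is an edge of C_d(G), i.e., C_{d,A}(G) ⊆ C_d(G). -/

import Mathlib

/-- An embedding is generic if its `d·n` coordinates are algebraically independent over `ℚ`. -/
def IsGeneric {n d : ℕ} (pt : Fin n → Fin d → ℝ) : Prop :=
  AlgebraicIndependent ℚ fun vi : Fin n × Fin d => pt vi.1 vi.2

/-- The rigidity-matrix row of a pair `e`, as a vector of `ℝ^{dn}` (with the Euclidean inner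
product). -/
noncomputable def rRow {n d : ℕ} (pt : Fin n → Fin d → ℝ) (e : Sym2 (Fin n)) :
    EuclideanSpace ℝ (Fin n × Fin d) :=
  WithLp.toLp 2 fun vi => if h : vi.1 ∈ e then pt vi.1 vi.2 - pt (Sym2.Mem.other h) vi.2 else 0

/-- `V_A`: the span of the rows of the pairs inside `A`. -/
noncomputable def VA (n d : ℕ) (pt : Fin n → Fin d → ℝ) (A : Set (Fin n)) :
    Submodule ℝ (EuclideanSpace ℝ (Fin n × Fin d)) :=
  Submodule.span ℝ (rRow pt '' {e : Sym2 (Fin n) | ¬ e.IsDiag ∧ ∀ v ∈ e, v ∈ A})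

/-- `P_{W_A} r_e`: the orthogonal projection of the row `r_e` onto `W_A = V_A^⊥`. -/
noncomputable def projRow (n d : ℕ) (pt : Fin n → Fin d → ℝ) (A : Set (Fin n))
    (e : Sym2 (Fin n)) : ↥((VA n d pt A)ᗮ) :=
  Submodule.orthogonalProjectionOnto (VA n d pt A)ᗮ (rRow pt e)

/-- `C_{d,A}(G)`: the pairs `f ∉ (A choose 2)` with `P_{W_A} r_f` in the span of the projected
rows of the edges of `G`. -/
def projClosure (n d : ℕ) (pt : Fin n → Fin d → ℝ) (A : Set (Fin n))
    (G : SimpleGraph (Fin n)) : Set (Sym2 (Fin n)) :=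
  {f | ¬ f.IsDiag ∧ ¬ (∀ v ∈ f, v ∈ A) ∧
    projRow n d pt A f ∈ Submodule.span ℝ (projRow n d pt A '' G.edgeSet)}

/-- The `d`-rigidity closure `C_d(G)` with respect to an embedding `pt`. -/
noncomputable def rigidityClosure (n d : ℕ) (pt : Fin n → Fin d → ℝ)
    (G : SimpleGraph (Fin n)) : SimpleGraph (Fin n) where
  Adj x y := x ≠ y ∧ rRow pt s(x, y) ∈ Submodule.span ℝ (rRow pt '' G.edgeSet)
  symm := ⟨fun x y h => ⟨h.1.symm, by rw [Sym2.eq_swap]; exact h.2⟩⟩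
  loopless := ⟨fun x h => h.1 rfl⟩

/-! The projection onto `W_A = V_Aᗮ` has kernel `V_A`. If `A` is a clique of `C_d(G)`, then `V_A`
lies in the span `S` of the rows of `G`, so a row whose projection lies in the projection of `S`
already lies in `S + V_A = S`. -/

theorem Submodule.mem_of_orthogonalProjectionOnto_orthogonal_mem_map {𝕜 E : Type*} [RCLike 𝕜]
    [NormedAddCommGroup E] [InnerProductSpace 𝕜 E] {K S : Submodule 𝕜 E}
    [K.HasOrthogonalProjection] (hKS : K ≤ S) {v : E}
    (hv : Kᗮ.orthogonalProjectionOnto v ∈ S.map (Kᗮ.orthogonalProjectionOnto : E →ₗ[𝕜] Kᗮ)) :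
    v ∈ S := by
  have hker : LinearMap.ker (Kᗮ.orthogonalProjectionOnto : E →ₗ[𝕜] Kᗮ) ≤ S := by
    rwa [Submodule.ker_orthogonalProjectionOnto, Submodule.orthogonal_orthogonal]
  rw [← Submodule.comap_map_eq_self hker]
  exact hv

theorem span_projRow_image_eq_map {n d : ℕ} (pt : Fin n → Fin d → ℝ) (A : Set (Fin n))
    (s : Set (Sym2 (Fin n))) :
    Submodule.span ℝ (projRow n d pt A '' s) =
      (Submodule.span ℝ (rRow pt '' s)).map
        ((VA n d pt A)ᗮ.orthogonalProjectionOnto : EuclideanSpace ℝ (Fin n × Fin d) →ₗ[ℝ] _) := by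
  rw [Submodule.map_span, Set.image_image]
  rfl

theorem VA_le_span_of_isClique {n d : ℕ} {pt : Fin n → Fin d → ℝ} {G : SimpleGraph (Fin n)}
    {A : Set (Fin n)} (hA : (rigidityClosure n d pt G).IsClique A) :
    VA n d pt A ≤ Submodule.span ℝ (rRow pt '' G.edgeSet) := by
  rw [VA, Submodule.span_le]
  rintro - ⟨e, ⟨hediag, heA⟩, rfl⟩
  induction e using Sym2.ind with
  | _ x y =>
    have hxy : x ≠ y := by simpa using hediag
    exact (hA (heA x (Sym2.mem_mk_left x y)) (heA y (Sym2.mem_mk_right x y)) hxy).2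

theorem stmt_8_general (d n : ℕ) (G : SimpleGraph (Fin n)) (pt : Fin n → Fin d → ℝ) (A : Set (Fin n))
    (hA : (rigidityClosure n d pt G).IsClique A) :
    projClosure n d pt A G ⊆ (rigidityClosure n d pt G).edgeSet := by
  rintro f ⟨hdiag, -, hproj⟩
  rw [span_projRow_image_eq_map] at hproj
  have hf := Submodule.mem_of_orthogonalProjectionOnto_orthogonal_mem_map
    (VA_le_span_of_isClique hA) hproj
  induction f using Sym2.ind with
  | _ x y => exact ⟨by simpa using hdiag, hf⟩

/-- Fix a generic embedding. If `A` induces a clique in the `d`-rigidity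
closure `C_d(G)`, then `C_{d,A}(G) ⊆ C_d(G)`. -/
theorem stmt_8 (d n : ℕ) (hd : 1 ≤ d) (hn : d < n) (G : SimpleGraph (Fin n))
    (pt : Fin n → Fin d → ℝ) (hpt : IsGeneric pt) (A : Set (Fin n))
    (hA : (rigidityClosure n d pt G).IsClique A) :
    projClosure n d pt A G ⊆ (rigidityClosure n d pt G).edgeSet :=
  stmt_8_general d n G pt A hA
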